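/- Let (S_t)_{t≥0} be a strongly continuous semigroup on a Banach space X, let B ⊂ X be nonempty, convex, closed, bounded and invariant (S_t(B) ⊂ B for all t), and suppose there exist constants C ≥ 1 and γ > 0 such that ‖S_t f - S_t h‖ ≤ C e^{-γ t} ‖f - h‖ for all f, h ∈ B and t ≥ 0. Assume B is weakly sequentially compact. Then there exists a unique u ∈ B with S_t u = u for all t ≥ 0. -/

import Mathlib

/-!
Take any `x ∈ B`. By weak sequential compactness some subsequence of the orbit `S n x`
converges weakly to a point `u ∈ B`. For fixed `t ≥ 0`, the contraction estimate applied to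
`S t x` and `x` gives `‖S t (S s x) - S s x‖ = ‖S s (S t x) - S s x‖ ≤ C e^{-γ s} ‖S t x - x‖`,
which tends to `0`, while `S t (S s x)` converges weakly to `S t u` along the subsequence, since
`S t` is weakly continuous. Weak limits are unique, so `S t u = u`. Two common fixed points
`u, v` satisfy `‖u - v‖ ≤ C e^{-γ t} ‖u - v‖` for all `t`, hence coincide.
-/

open Filter Topology

lemma tendsto_exp_neg_mul_atTop_nhds_zero {γ : ℝ} (hγ : 0 < γ) :
    Tendsto (fun t : ℝ => Real.exp (-γ * t)) atTop (𝓝 0) :=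
  Real.tendsto_exp_atBot.comp (tendsto_id.const_mul_atTop_of_neg (neg_neg_of_pos hγ))

lemma eq_of_weak_tendsto_of_tendsto_sub {X ι : Type*} [NormedAddCommGroup X] [NormedSpace ℝ X]
    {l : Filter ι} [l.NeBot] {x y : ι → X} {a b : X}
    (hx : ∀ ℓ : X →L[ℝ] ℝ, Tendsto (fun n => ℓ (x n)) l (𝓝 (ℓ a)))
    (hy : ∀ ℓ : X →L[ℝ] ℝ, Tendsto (fun n => ℓ (y n)) l (𝓝 (ℓ b)))
    (hxy : Tendsto (fun n => x n - y n) l (𝓝 0)) : a = b := by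
  refine (SeparatingDual.eq_iff_forall_dual_eq (R := ℝ)).2 fun ℓ => ?_
  have hℓxy : Tendsto (fun n => ℓ (x n) - ℓ (y n)) l (𝓝 0) := by
    simpa only [Function.comp_def, map_sub] using
      (ℓ.continuous.tendsto' 0 0 (map_zero ℓ)).comp hxy
  exact sub_eq_zero.mp (tendsto_nhds_unique ((hx ℓ).sub (hy ℓ)) hℓxy)

section Semigroup

variable {X : Type*} [NormedAddCommGroup X] [NormedSpace ℝ X] {S : ℝ → X →L[ℝ] X}
  {B : Set X} {C γ : ℝ}

lemma semigroup_apply_comm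
    (hSsem : ∀ s t : ℝ, 0 ≤ s → 0 ≤ t → S (s + t) = (S s).comp (S t))
    {s t : ℝ} (hs : 0 ≤ s) (ht : 0 ≤ t) (x : X) : S s (S t x) = S t (S s x) := by
  rw [← ContinuousLinearMap.comp_apply, ← hSsem s t hs ht, add_comm, hSsem t s ht hs,
    ContinuousLinearMap.comp_apply]

lemma tendsto_apply_orbit_sub_orbit
    (hSsem : ∀ s t : ℝ, 0 ≤ s → 0 ≤ t → S (s + t) = (S s).comp (S t))
    (hBinv : ∀ t ≥ (0:ℝ), ∀ f ∈ B, S t f ∈ B) (hγ : 0 < γ)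
    (hcontr : ∀ t ≥ (0:ℝ), ∀ f ∈ B, ∀ h ∈ B,
        ‖S t f - S t h‖ ≤ C * Real.exp (-γ * t) * ‖f - h‖)
    {x : X} (hx : x ∈ B) {t : ℝ} (ht : 0 ≤ t) :
    Tendsto (fun s => S t (S s x) - S s x) atTop (𝓝 0) := by
  have hbound : ∀ᶠ s in atTop,
      ‖S t (S s x) - S s x‖ ≤ C * Real.exp (-γ * s) * ‖S t x - x‖ := by
    filter_upwards [eventually_ge_atTop 0] with s hs
    rw [← semigroup_apply_comm hSsem hs ht]
    exact hcontr s hs _ (hBinv t ht x hx) x hx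
  refine squeeze_zero_norm' hbound ?_
  simpa using ((tendsto_exp_neg_mul_atTop_nhds_zero hγ).const_mul C).mul_const ‖S t x - x‖

lemma apply_eq_of_weak_tendsto_orbit
    (hSsem : ∀ s t : ℝ, 0 ≤ s → 0 ≤ t → S (s + t) = (S s).comp (S t))
    (hBinv : ∀ t ≥ (0:ℝ), ∀ f ∈ B, S t f ∈ B) (hγ : 0 < γ)
    (hcontr : ∀ t ≥ (0:ℝ), ∀ f ∈ B, ∀ h ∈ B,
        ‖S t f - S t h‖ ≤ C * Real.exp (-γ * t) * ‖f - h‖)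
    {x u : X} (hx : x ∈ B) {τ : ℕ → ℝ} (hτ : Tendsto τ atTop atTop)
    (hweak : ∀ ℓ : X →L[ℝ] ℝ, Tendsto (fun n => ℓ (S (τ n) x)) atTop (𝓝 (ℓ u)))
    {t : ℝ} (ht : 0 ≤ t) : S t u = u :=
  eq_of_weak_tendsto_of_tendsto_sub (fun ℓ => hweak (ℓ.comp (S t))) hweak
    ((tendsto_apply_orbit_sub_orbit hSsem hBinv hγ hcontr hx ht).comp hτ)

lemma eq_of_forall_apply_eq (hγ : 0 < γ)
    (hcontr : ∀ t ≥ (0:ℝ), ∀ f ∈ B, ∀ h ∈ B,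
        ‖S t f - S t h‖ ≤ C * Real.exp (-γ * t) * ‖f - h‖)
    {u v : X} (hu : u ∈ B) (hv : v ∈ B)
    (hSu : ∀ t ≥ (0:ℝ), S t u = u) (hSv : ∀ t ≥ (0:ℝ), S t v = v) : u = v := by
  have hbound : ∀ᶠ t in atTop, ‖u - v‖ ≤ C * Real.exp (-γ * t) * ‖u - v‖ := by
    filter_upwards [eventually_ge_atTop 0] with t ht
    simpa only [hSu t ht, hSv t ht] using hcontr t ht u hu v hv
  have hlim : Tendsto (fun t : ℝ => C * Real.exp (-γ * t) * ‖u - v‖) atTop (𝓝 0) := by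
    simpa using ((tendsto_exp_neg_mul_atTop_nhds_zero hγ).const_mul C).mul_const ‖u - v‖
  exact sub_eq_zero.mp (norm_le_zero_iff.mp (ge_of_tendsto hlim hbound))

end Semigroup

theorem semigroup_unique_fixed_point_general {X : Type*} [NormedAddCommGroup X]
    [NormedSpace ℝ X] (S : ℝ → X →L[ℝ] X)
    (hSsem : ∀ s t : ℝ, 0 ≤ s → 0 ≤ t → S (s + t) = (S s).comp (S t))
    (B : Set X) (hBne : B.Nonempty)
    (hBinv : ∀ t ≥ (0:ℝ), ∀ f ∈ B, S t f ∈ B)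
    (C γ : ℝ) (hγ : 0 < γ)
    (hcontr : ∀ t ≥ (0:ℝ), ∀ f ∈ B, ∀ h ∈ B,
        ‖S t f - S t h‖ ≤ C * Real.exp (-γ * t) * ‖f - h‖)
    (hBweakcpt : ∀ f : ℕ → X, (∀ n, f n ∈ B) →
        ∃ u ∈ B, ∃ φ : ℕ → ℕ, StrictMono φ ∧
          ∀ ℓ : X →L[ℝ] ℝ, Tendsto (fun n => ℓ (f (φ n))) atTop (𝓝 (ℓ u))) :
    ∃! u : X, u ∈ B ∧ ∀ t ≥ (0:ℝ), S t u = u := by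
  obtain ⟨x, hx⟩ := hBne
  obtain ⟨u, huB, φ, hφ, hweak⟩ :=
    hBweakcpt (fun n => S n x) fun n => hBinv n n.cast_nonneg x hx
  have hτ : Tendsto (fun n => (φ n : ℝ)) atTop atTop :=
    tendsto_natCast_atTop_atTop.comp hφ.tendsto_atTop
  have hu : ∀ t ≥ (0:ℝ), S t u = u := fun t ht =>
    apply_eq_of_weak_tendsto_orbit hSsem hBinv hγ hcontr hx hτ hweak ht
  exact ⟨u, ⟨huB, hu⟩, fun v ⟨hvB, hv⟩ =>
    eq_of_forall_apply_eq hγ hcontr hvB huB hv hu⟩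

/-- Abstract fixed-point argument: a strongly continuous semigroup which is an
exponential contraction on a nonempty convex closed bounded invariant, weakly
sequentially compact set B admits a unique common fixed point in B. -/
theorem semigroup_unique_fixed_point {X : Type*} [NormedAddCommGroup X]
    [NormedSpace ℝ X] (S : ℝ → X →L[ℝ] X)
    (hS0 : S 0 = ContinuousLinearMap.id ℝ X)
    (hSsem : ∀ s t : ℝ, 0 ≤ s → 0 ≤ t → S (s + t) = (S s).comp (S t))
    (hScont : ∀ x : X, Continuous fun t : ℝ => S t x)
    (B : Set X) (hBne : B.Nonempty) (hBconv : Convex ℝ B) (hBcl : IsClosed B)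
    (hBbdd : Bornology.IsBounded B)
    (hBinv : ∀ t ≥ (0:ℝ), ∀ f ∈ B, S t f ∈ B)
    (C γ : ℝ) (hC : 1 ≤ C) (hγ : 0 < γ)
    (hcontr : ∀ t ≥ (0:ℝ), ∀ f ∈ B, ∀ h ∈ B,
        ‖S t f - S t h‖ ≤ C * Real.exp (-γ * t) * ‖f - h‖)
    (hBweakcpt : ∀ f : ℕ → X, (∀ n, f n ∈ B) →
        ∃ u ∈ B, ∃ φ : ℕ → ℕ, StrictMono φ ∧
          ∀ ℓ : X →L[ℝ] ℝ, Tendsto (fun n => ℓ (f (φ n))) atTop (𝓝 (ℓ u))) :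
    ∃! u : X, u ∈ B ∧ ∀ t ≥ (0:ℝ), S t u = u :=
  semigroup_unique_fixed_point_general S hSsem B hBne hBinv C γ hγ hcontr hBweakcpt
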